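/- arXiv:2412.00212 — 4 statements merged into one kernel-verified Lean document; each statement's English description precedes it below -/
import Mathlib

section
/- If G = (V,E) is a regular finite simple graph (every vertex has the same degree) with p vertices and q edges, then every easy construction sequence x for G satisfies ν(x) = q(p + q), and consequently ν*(G) = q(p + q). -/
/-!
Let `P y` be the (0-based) position of `y` in a c-sequence. Summing
`ν(e,x) = 2 P e - P u - P w` over the edges, the handshake lemma turns `∑ₑ (P u + P w)` into
`r ∑ᵥ P v`; as the positions exhaust `0, …, p+q-1`, this gives
`ν(x) = 2 ∑_{i<p+q} i - (r+2) ∑ᵥ P v`. The `p` vertex positions are distinct, so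
`∑ᵥ P v ≥ ∑_{i<p} i`, with equality when they are `0, …, p-1`, i.e. for easy sequences; using
`p r = 2 q`, the resulting bound is `q (p+q)`.
-/

namespace ConsCost

variable {V : Type*} [Fintype V]

/-- The number of elements (vertices plus edges) of a graph. -/
noncomputable def numElts (G : SimpleGraph V) : ℕ :=
  Fintype.card V + Nat.card G.edgeSet

/-- `x` is a construction sequence for `G`: a bijective listing of the vertices and
edges of `G` in which every edge appears after both of its endpoints. -/
def IsCSeq (G : SimpleGraph V) (x : Fin (numElts G) ≃ V ⊕ G.edgeSet) : Prop :=
  ∀ (e : G.edgeSet), ∀ v ∈ (e : Sym2 V), x.symm (Sum.inl v) < x.symm (Sum.inr e)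

/-- The cost `ν(e,x) = (x⁻¹e − x⁻¹u) + (x⁻¹e − x⁻¹w)` of an edge `e = uw`
in the construction sequence `x`. -/
noncomputable def edgeCost (G : SimpleGraph V) (x : Fin (numElts G) ≃ V ⊕ G.edgeSet)
    (e : G.edgeSet) : ℕ :=
  2 * (x.symm (Sum.inr e) : ℕ) -
    Sym2.lift ⟨fun u w => ((x.symm (Sum.inl u) : ℕ) + (x.symm (Sum.inl w) : ℕ)),
      fun u w => by dsimp only; omega⟩ (e : Sym2 V)

/-- The cost `ν(x)` of a construction sequence: the sum of the costs of all edges. -/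
noncomputable def cost (G : SimpleGraph V) (x : Fin (numElts G) ≃ V ⊕ G.edgeSet) : ℕ :=
  ∑ᶠ e : G.edgeSet, edgeCost G x e

/-- The maximum construction cost `ν*(G)`. -/
noncomputable def maxCost (G : SimpleGraph V) : ℕ :=
  sSup {c | ∃ x, IsCSeq G x ∧ cost G x = c}

/-- The minimum construction cost `ν_*(G)`. -/
noncomputable def minCost (G : SimpleGraph V) : ℕ :=
  sInf {c | ∃ x, IsCSeq G x ∧ cost G x = c}

open Finset

theorem sum_range_card_le_sum (s : Finset ℕ) : ∑ i ∈ range #s, i ≤ ∑ i ∈ s, i := by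
  induction s using Finset.induction_on_max with
  | empty => simp
  | insert a s hlt ih =>
    have hsa : #s ≤ a := by simpa using card_le_card (fun i hi => mem_range.2 (hlt i hi))
    have ha : a ∉ s := fun h => (hlt a h).false
    rw [card_insert_of_notMem ha, sum_range_succ, sum_insert ha]
    omega

theorem sum_range_card_le_sum_of_injective {α : Type*} [Fintype α] {f : α → ℕ}
    (hf : Function.Injective f) : ∑ i ∈ range (Fintype.card α), i ≤ ∑ a, f a := by
  simpa [card_image_of_injective _ hf, sum_image fun a _ b _ h => hf h] using
    sum_range_card_le_sum (univ.image f)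

theorem sum_eq_sum_range_card_of_injective {α : Type*} [Fintype α] {f : α → ℕ}
    (hf : Function.Injective f) (hlt : ∀ a, f a < Fintype.card α) :
    ∑ a, f a = ∑ i ∈ range (Fintype.card α), i := by
  have himage : univ.image f = range (Fintype.card α) :=
    eq_of_subset_of_card_le (fun i hi => by obtain ⟨a, -, rfl⟩ := mem_image.1 hi; simpa using hlt a)
      (by simp [card_image_of_injective _ hf])
  rw [← himage, sum_image fun a _ b _ h => hf h]

theorem two_mul_sum_range_add_eq {p q r : ℕ} (hpq : p * r = 2 * q) :
    2 * ∑ i ∈ range (p + q), i = q * (p + q) + (r + 2) * ∑ i ∈ range p, i := by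
  have hN := sum_range_id_mul_two (p + q)
  have hp := sum_range_id_mul_two p
  obtain _ | p := p
  · simp_all
  · rw [Nat.add_sub_cancel] at hp
    rw [show p + 1 + q - 1 = p + q by omega] at hN
    qify at *
    linear_combination hN - (r + 2) / 2 * hp - p / 2 * hpq

section SumEquiv

variable {α β : Type*} {N : ℕ}

theorem injective_val_symm_inl (x : Fin N ≃ α ⊕ β) :
    Function.Injective fun a => (x.symm (.inl a) : ℕ) :=
  fun _ _ h => Sum.inl_injective (x.symm.injective (Fin.val_injective h))

variable [Fintype α] [Fintype β]

theorem sum_val_symm_inl_add_sum_val_symm_inr (x : Fin N ≃ α ⊕ β) :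
    ∑ a, (x.symm (.inl a) : ℕ) + ∑ b, (x.symm (.inr b) : ℕ) = ∑ i ∈ range N, i := by
  rw [← Fintype.sum_sum_type (fun c => (x.symm c : ℕ)), Equiv.sum_comp x.symm (fun i => (i : ℕ)),
    Fin.sum_univ_eq_sum_range (fun i => i) N]

theorem val_symm_inl_lt_card (x : Fin N ≃ α ⊕ β)
    (hx : ∀ a b, x.symm (.inl a) < x.symm (.inr b)) (a : α) :
    (x.symm (.inl a) : ℕ) < Fintype.card α := by
  have hN : N = Fintype.card α + Fintype.card β := by
    simpa using Fintype.card_congr x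
  have hcard : Fintype.card β ≤ N - 1 - x.symm (.inl a) := by
    rw [← Fin.card_Ioi]
    exact card_le_card_of_injOn (fun b => x.symm (.inr b)) (fun b _ => by simpa using hx a b)
      fun b _ c _ h => by simpa using h
  omega

theorem exists_symm_inl_lt_symm_inr (hN : N = Fintype.card α + Fintype.card β) :
    ∃ x : Fin N ≃ α ⊕ β, ∀ a b, x.symm (.inl a) < x.symm (.inr b) := by
  refine ⟨(finCongr hN).trans (finSumFinEquiv.symm.trans
    ((Fintype.equivFin α).symm.sumCongr (Fintype.equivFin β).symm)), fun a b => ?_⟩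
  simpa [Fin.lt_def] using Nat.lt_add_right _ (Fintype.equivFin α a).isLt

end SumEquiv

theorem sum_lift_add_eq_sum_degree_nsmul {M : Type*} [AddCommMonoid M]
    (G : SimpleGraph V) [DecidableRel G.Adj] (f : V → M) :
    ∑ e ∈ G.edgeFinset, Sym2.lift ⟨fun u w => f u + f w, fun _ _ => add_comm _ _⟩ e =
      ∑ v, G.degree v • f v := by
  classical
  calc ∑ e ∈ G.edgeFinset, Sym2.lift ⟨fun u w => f u + f w, fun _ _ => add_comm _ _⟩ e
      = ∑ d : G.Dart, f d.fst := by
        rw [← sum_fiberwise_of_maps_to (g := SimpleGraph.Dart.edge)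
          (fun d _ => SimpleGraph.mem_edgeFinset.2 d.edge_mem)]
        refine sum_congr rfl fun e he => ?_
        induction e with
        | _ u w =>
          let d : G.Dart := ⟨(u, w), SimpleGraph.mem_edgeFinset.1 he⟩
          rw [show s(u, w) = d.edge from rfl, d.edge_fiber, sum_pair d.symm_ne.symm]
          rfl
    _ = ∑ v, G.degree v • f v := by
        rw [← sum_fiberwise univ (fun d : G.Dart => d.fst)]
        refine sum_congr rfl fun v _ => ?_
        rw [sum_congr rfl fun d hd => by rw [(mem_filter.1 hd).2], sum_const,
          G.dart_fst_fiber_card_eq_degree]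

theorem edgeCost_add_lift {G : SimpleGraph V} {x : Fin (numElts G) ≃ V ⊕ G.edgeSet}
    (hx : IsCSeq G x) (e : G.edgeSet) :
    edgeCost G x e + Sym2.lift ⟨fun u w => (x.symm (.inl u) : ℕ) + x.symm (.inl w),
      fun _ _ => add_comm _ _⟩ e = 2 * x.symm (.inr e) := by
  obtain ⟨e, he⟩ := e
  induction e with
  | _ u w =>
    have hu := hx ⟨s(u, w), he⟩ u (Sym2.mem_mk_left u w)
    have hw := hx ⟨s(u, w), he⟩ w (Sym2.mem_mk_right u w)
    rw [Fin.lt_def] at hu hw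
    -- `hu` and `hw` make the truncated subtraction in `edgeCost` exact
    simp only [edgeCost, Sym2.lift_mk]
    omega

theorem cost_add_sum_degree_mul {G : SimpleGraph V} [DecidableRel G.Adj]
    {x : Fin (numElts G) ≃ V ⊕ G.edgeSet} (hx : IsCSeq G x) :
    cost G x + ∑ v, G.degree v * (x.symm (.inl v) : ℕ) = 2 * ∑ e, (x.symm (.inr e) : ℕ) := by
  rw [cost, finsum_eq_sum_of_fintype, mul_sum, ← sum_congr rfl fun e _ => edgeCost_add_lift hx e,
    sum_add_distrib]
  congr 1
  rw [← sum_subtype G.edgeFinset (fun e => SimpleGraph.mem_edgeFinset),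
    sum_lift_add_eq_sum_degree_nsmul]
  rfl

section Regular

variable {G : SimpleGraph V} [DecidableRel G.Adj] {r : ℕ}

theorem card_mul_eq_two_mul_card_edgeSet_of_isRegularOfDegree (hreg : G.IsRegularOfDegree r) :
    Fintype.card V * r = 2 * Nat.card G.edgeSet := by
  have hsum := G.sum_degrees_eq_twice_card_edges
  simp only [hreg.degree_eq, sum_const, card_univ, smul_eq_mul] at hsum
  rw [hsum, SimpleGraph.edgeFinset_card, Nat.card_eq_fintype_card]

theorem cost_add_mul_sum_eq_of_isRegularOfDegree (hreg : G.IsRegularOfDegree r)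
    {x : Fin (numElts G) ≃ V ⊕ G.edgeSet} (hx : IsCSeq G x) :
    cost G x + (r + 2) * ∑ v, (x.symm (.inl v) : ℕ) =
      Nat.card G.edgeSet * (Fintype.card V + Nat.card G.edgeSet) +
        (r + 2) * ∑ i ∈ range (Fintype.card V), i := by
  have hdeg := cost_add_sum_degree_mul hx
  simp only [hreg.degree_eq, ← mul_sum] at hdeg
  have htotal : ∑ v, (x.symm (.inl v) : ℕ) + ∑ e, (x.symm (.inr e) : ℕ) =
      ∑ i ∈ range (Fintype.card V + Nat.card G.edgeSet), i :=
    sum_val_symm_inl_add_sum_val_symm_inr x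
  rw [← two_mul_sum_range_add_eq (card_mul_eq_two_mul_card_edgeSet_of_isRegularOfDegree hreg)]
  linarith

theorem cost_eq_of_isRegularOfDegree (hreg : G.IsRegularOfDegree r)
    {x : Fin (numElts G) ≃ V ⊕ G.edgeSet} (hx : IsCSeq G x)
    (heasy : ∀ v e, x.symm (.inl v) < x.symm (.inr e)) :
    cost G x = Nat.card G.edgeSet * (Fintype.card V + Nat.card G.edgeSet) := by
  have hcost := cost_add_mul_sum_eq_of_isRegularOfDegree hreg hx
  rwa [sum_eq_sum_range_card_of_injective (injective_val_symm_inl x)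
    (val_symm_inl_lt_card x heasy), Nat.add_right_cancel_iff] at hcost

theorem cost_le_of_isRegularOfDegree (hreg : G.IsRegularOfDegree r)
    {x : Fin (numElts G) ≃ V ⊕ G.edgeSet} (hx : IsCSeq G x) :
    cost G x ≤ Nat.card G.edgeSet * (Fintype.card V + Nat.card G.edgeSet) := by
  have hcost := cost_add_mul_sum_eq_of_isRegularOfDegree hreg hx
  have hsum := Nat.mul_le_mul_left (r + 2)
    (sum_range_card_le_sum_of_injective (injective_val_symm_inl x))
  omega

end Regular

/-- For a regular graph, every easy construction sequence has cost `q(p+q)`, and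
consequently `ν*(G) = q(p+q)`. -/
theorem regular_maxCost {V : Type*} [Fintype V] (G : SimpleGraph V)
    [DecidableRel G.Adj] (r : ℕ) (hreg : G.IsRegularOfDegree r) :
    (∀ (x : Fin (numElts G) ≃ V ⊕ G.edgeSet), IsCSeq G x →
        (∀ (v : V) (e : G.edgeSet), x.symm (Sum.inl v) < x.symm (Sum.inr e)) →
        cost G x = Nat.card G.edgeSet * (Fintype.card V + Nat.card G.edgeSet)) ∧
      maxCost G = Nat.card G.edgeSet * (Fintype.card V + Nat.card G.edgeSet) := by
  refine ⟨fun x hx heasy => cost_eq_of_isRegularOfDegree hreg hx heasy, ?_⟩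
  obtain ⟨x, heasy⟩ := exists_symm_inl_lt_symm_inr (α := V) (β := G.edgeSet) (N := numElts G)
    (by rw [numElts, Nat.card_eq_fintype_card])
  have hx : IsCSeq G x := fun e v _ => heasy v e
  refine IsGreatest.csSup_eq ⟨⟨x, hx, cost_eq_of_isRegularOfDegree hreg hx heasy⟩, ?_⟩
  rintro _ ⟨y, hy, rfl⟩
  exact cost_le_of_isRegularOfDegree hreg hy

end ConsCost
end

section
/- Among trees with n vertices, the path and the star are extremal for maximum construction cost: if T is a tree with n vertices (n ≥ 2), then ν*(P_n) ≤ ν*(T) ≤ ν*(K_{1,n−1}), i.e. 2n² − 2n − 1 ≤ ν*(T) ≤ (5(n−1)² + (n−1))/2. -/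
namespace ConsCost

variable {V : Type*} [Fintype V]

/-! Write `pos z ∈ {0, …, N - 1}` for the position of the element `z` in a construction sequence
`x`, where `N = p + q`. Summing the edge costs and using the handshake lemma gives
`ν(x) + ∑ᵥ deg v · pos v = 2 ∑ₑ pos e`, and all positions together sum to `N(N - 1)/2`.

Upper bound: in a tree with `n ≥ 2` vertices every degree is at least `1`, so
`ν(x) ≤ N(N - 1) - 3 ∑ᵥ pos v`, and the `n` distinct vertex positions sum to at least
`n(n - 1)/2`.

Lower bound: list the vertices first, by decreasing degree, and then the edges. For an antitone
sequence of positive integers with sum `2(n - 1)` we have `2 ∑ᵢ i dᵢ ≤ n(n - 1) + (n - 2)(n - 3)`,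
so this sequence costs at least `2n² - 2n - 1`. -/

open Finset

theorem two_mul_sum_fin_val_add (n : ℕ) : 2 * ∑ i : Fin n, (i : ℕ) + n = n ^ 2 := by
  rw [Fin.sum_univ_eq_sum_range (fun i => i), mul_comm, sum_range_id_mul_two, Nat.mul_sub_one,
    Nat.sub_add_cancel (Nat.le_mul_self n), sq]

theorem sq_card_le_two_mul_sum_add_card (s : Finset ℕ) : #s ^ 2 ≤ 2 * ∑ i ∈ s, i + #s := by
  induction s using Finset.induction_on_max with
  | empty => simp
  | insert a s ha ih =>
    have has : a ∉ s := fun h => lt_irrefl a (ha a h)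
    have hcard : #s ≤ a := by
      simpa using card_le_card (fun i hi => mem_range.2 (ha i hi) : s ⊆ range a)
    rw [card_insert_of_notMem has, sum_insert has]
    nlinarith

theorem two_mul_sum_mul_add_sum_le_sq_of_antitone :
    ∀ {n : ℕ} {e : Fin n → ℕ}, Antitone e →
      2 * ∑ i : Fin n, (i : ℕ) * e i + ∑ i, e i ≤ (∑ i, e i) ^ 2
  | 0, _, _ => by simp
  | n + 1, e, he => by
    have ih := two_mul_sum_mul_add_sum_le_sq_of_antitone
      (he.comp_monotone Fin.strictMono_castSucc.monotone)
    have hlast : n * e (Fin.last n) ≤ ∑ i : Fin n, e i.castSucc :=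
      calc n * e (Fin.last n) = ∑ _i : Fin n, e (Fin.last n) := by simp
        _ ≤ _ := sum_le_sum fun i _ => he (Fin.le_last _)
    simp only [Fin.sum_univ_castSucc, Fin.val_castSucc, Fin.val_last, Function.comp_apply]
      at ih ⊢
    rcases Nat.eq_zero_or_pos (e (Fin.last n)) with hzero | hpos
    · rw [hzero]
      simpa using ih
    · have : n * e (Fin.last n) ≤ (∑ i : Fin n, e i.castSucc) * e (Fin.last n) :=
        (Nat.le_mul_of_pos_right _ hpos).trans (Nat.mul_le_mul_right _ hlast)
      nlinarith

theorem two_mul_sum_mul_add_sum_le_of_antitone_of_one_le {n : ℕ} {d : Fin n → ℕ}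
    (hd : Antitone d) (hd1 : ∀ i, 1 ≤ d i) :
    2 * ∑ i : Fin n, (i : ℕ) * d i + ∑ i, d i ≤ n ^ 2 + (∑ i, d i - n) ^ 2 := by
  have hsplit : ∀ i, d i = (d i - 1) + 1 := fun i => (Nat.sub_add_cancel (hd1 i)).symm
  have hsum : ∑ i, d i = ∑ i, (d i - 1) + n := by
    conv_lhs => rw [funext hsplit]
    simp [sum_add_distrib]
  have hmul : ∑ i : Fin n, (i : ℕ) * d i
      = ∑ i : Fin n, (i : ℕ) * (d i - 1) + ∑ i : Fin n, (i : ℕ) := by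
    conv_lhs => rw [funext hsplit]
    simp [mul_add, sum_add_distrib]
  have key := two_mul_sum_mul_add_sum_le_sq_of_antitone
    fun i j hij => Nat.sub_le_sub_right (hd hij) 1
  have gauss := two_mul_sum_fin_val_add n
  rw [hsum, hmul, Nat.add_sub_cancel]
  nlinarith

theorem exists_equiv_fin_antitone {α β : Type*} [Fintype α] [LinearOrder β] (f : α → β) :
    ∃ σ : Fin (Fintype.card α) ≃ α, Antitone fun i => f (σ i) := by
  let e := (Fintype.equivFin α).symm
  exact ⟨(Fin.revPerm.trans (Tuple.sort (f ∘ e))).trans e,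
    fun i j hij => Tuple.monotone_sort (f ∘ e) (Fin.rev_le_rev.mpr hij)⟩

theorem sum_edgeSet_lift_add [DecidableEq V] (G : SimpleGraph V) [DecidableRel G.Adj]
    {M : Type*} [AddCommMonoid M] (f : V → M) :
    ∑ e : G.edgeSet, Sym2.lift ⟨fun u w => f u + f w, fun _ _ => add_comm _ _⟩ (e : Sym2 V)
      = ∑ v, G.degree v • f v := by
  calc _ = ∑ d : G.Dart, f d.fst := by
        rw [← sum_fiberwise (g := fun d : G.Dart => (⟨d.edge, d.edge_mem⟩ : G.edgeSet))]
        refine sum_congr rfl fun ⟨e, he⟩ _ => ?_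
        induction e with
        | _ u w =>
          let d : G.Dart := ⟨(u, w), he⟩
          have hfib : univ.filter (fun d' : G.Dart =>
              (⟨d'.edge, d'.edge_mem⟩ : G.edgeSet) = ⟨s(u, w), he⟩) = {d, d.symm} := by
            simp only [Subtype.mk.injEq]
            exact d.edge_fiber
          rw [hfib, sum_pair d.symm_ne.symm]
          rfl
    _ = ∑ v, G.degree v • f v := by
        rw [← sum_fiberwise (g := fun d : G.Dart => d.fst)]
        refine sum_congr rfl fun v _ => ?_
        rw [sum_congr rfl fun d hd => by rw [(mem_filter.mp hd).2], sum_const,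
          ← G.dart_fst_fiber_card_eq_degree v]

section Positions

variable {G : SimpleGraph V} (x : Fin (numElts G) ≃ V ⊕ G.edgeSet)

theorem sq_card_le_two_mul_sum_vertex_pos_add_card :
    Fintype.card V ^ 2 ≤ 2 * ∑ v, (x.symm (.inl v) : ℕ) + Fintype.card V := by
  have hinj : Function.Injective fun v => (x.symm (.inl v) : ℕ) :=
    fun _ _ h => Sum.inl_injective (x.symm.injective (Fin.val_injective h))
  simpa [card_image_of_injective _ hinj, sum_image fun _ _ _ _ h => hinj h]
    using sq_card_le_two_mul_sum_add_card (univ.image fun v => (x.symm (.inl v) : ℕ))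

variable {x}

theorem edgeCost_add_lift_eq (hx : IsCSeq G x) (e : G.edgeSet) :
    edgeCost G x e + Sym2.lift ⟨fun u w => (x.symm (.inl u) : ℕ) + x.symm (.inl w),
      fun _ _ => add_comm _ _⟩ (e : Sym2 V) = 2 * x.symm (.inr e) := by
  obtain ⟨e, he⟩ := e
  induction e with
  | _ u w =>
    have hu := hx ⟨s(u, w), he⟩ u (Sym2.mem_mk_left u w)
    have hw := hx ⟨s(u, w), he⟩ w (Sym2.mem_mk_right u w)
    rw [Fin.lt_def] at hu hw
    simp only [edgeCost, Sym2.lift_mk]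
    omega

variable (x) [DecidableRel G.Adj]

theorem two_mul_sum_pos_add_numElts :
    2 * (∑ v, (x.symm (.inl v) : ℕ) + ∑ e, (x.symm (.inr e) : ℕ)) + numElts G
      = numElts G ^ 2 := by
  rw [← Fintype.sum_sum_type (f := fun z => (x.symm z : ℕ)),
    Equiv.sum_comp x.symm (fun i : Fin (numElts G) => (i : ℕ)), two_mul_sum_fin_val_add]

variable {x} [DecidableEq V]

theorem cost_add_sum_degree_mul_pos (hx : IsCSeq G x) :
    cost G x + ∑ v, G.degree v * (x.symm (.inl v) : ℕ)
      = 2 * ∑ e, (x.symm (.inr e) : ℕ) := by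
  simp only [← smul_eq_mul (a := G.degree _), ← sum_edgeSet_lift_add, cost,
    finsum_eq_sum_of_fintype, ← sum_add_distrib, mul_sum, edgeCost_add_lift_eq hx]

theorem two_mul_cost_add_le_of_one_le_degree (hdeg : ∀ v, 1 ≤ G.degree v) (hx : IsCSeq G x) :
    2 * cost G x + 2 * numElts G + 3 * Fintype.card V ^ 2
      ≤ 2 * numElts G ^ 2 + 3 * Fintype.card V := by
  have hP_le_D : ∑ v, (x.symm (.inl v) : ℕ) ≤ ∑ v, G.degree v * (x.symm (.inl v) : ℕ) :=
    sum_le_sum fun v _ => Nat.le_mul_of_pos_left _ (hdeg v)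
  have := cost_add_sum_degree_mul_pos hx
  have := two_mul_sum_pos_add_numElts x
  have := sq_card_le_two_mul_sum_vertex_pos_add_card x
  omega

end Positions

noncomputable def vertexFirst (G : SimpleGraph V) (σ : Fin (Fintype.card V) ≃ V) :
    Fin (numElts G) ≃ V ⊕ G.edgeSet :=
  finSumFinEquiv.symm.trans (σ.sumCongr (Finite.equivFin G.edgeSet).symm)

section VertexFirst

variable (G : SimpleGraph V) (σ : Fin (Fintype.card V) ≃ V)

theorem vertexFirst_symm_inl (v : V) : ((vertexFirst G σ).symm (.inl v) : ℕ) = σ.symm v :=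
  rfl

theorem vertexFirst_symm_inr (e : G.edgeSet) :
    ((vertexFirst G σ).symm (.inr e) : ℕ) = Fintype.card V + Finite.equivFin G.edgeSet e :=
  rfl

theorem isCSeq_vertexFirst : IsCSeq G (vertexFirst G σ) := by
  intro e v _
  rw [Fin.lt_def, vertexFirst_symm_inl, vertexFirst_symm_inr]
  omega

theorem two_mul_sum_edge_pos_vertexFirst_add [DecidableRel G.Adj] :
    2 * ∑ e, ((vertexFirst G σ).symm (.inr e) : ℕ) + Nat.card G.edgeSet
      = 2 * Fintype.card V * Nat.card G.edgeSet + Nat.card G.edgeSet ^ 2 := by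
  have gauss := two_mul_sum_fin_val_add (Nat.card G.edgeSet)
  simp only [vertexFirst_symm_inr, sum_add_distrib, sum_const, card_univ, smul_eq_mul,
    ← Nat.card_eq_fintype_card (α := G.edgeSet)]
  rw [Equiv.sum_comp (Finite.equivFin G.edgeSet) (fun j => (j : ℕ))]
  linarith

end VertexFirst

theorem le_two_mul_cost_vertexFirst [DecidableEq V] {G : SimpleGraph V} [DecidableRel G.Adj]
    {σ : Fin (Fintype.card V) ≃ V} (hdeg : ∀ v, 1 ≤ G.degree v)
    (hσ : Antitone fun i => G.degree (σ i)) :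
    4 * Fintype.card V * Nat.card G.edgeSet + 2 * Nat.card G.edgeSet ^ 2
      ≤ 2 * cost G (vertexFirst G σ) + Fintype.card V ^ 2
        + (2 * Nat.card G.edgeSet - Fintype.card V) ^ 2 := by
  have hD : ∑ v, G.degree v * ((vertexFirst G σ).symm (.inl v) : ℕ)
      = ∑ i : Fin (Fintype.card V), (i : ℕ) * G.degree (σ i) := by
    rw [← Equiv.sum_comp σ]
    simp only [vertexFirst_symm_inl, Equiv.symm_apply_apply, mul_comm]
  have hdegsum : ∑ i, G.degree (σ i) = 2 * Nat.card G.edgeSet := by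
    rw [Equiv.sum_comp σ fun v => G.degree v, G.sum_degrees_eq_twice_card_edges,
      Nat.card_eq_fintype_card, SimpleGraph.edgeFinset_card]
  have hrearr := two_mul_sum_mul_add_sum_le_of_antitone_of_one_le hσ fun i => hdeg (σ i)
  have hcost := cost_add_sum_degree_mul_pos (isCSeq_vertexFirst G σ)
  have hedges := two_mul_sum_edge_pos_vertexFirst_add G σ
  rw [hdegsum] at hrearr
  rw [hD] at hcost
  linarith

theorem bddAbove_costs (G : SimpleGraph V) : BddAbove {c | ∃ x, IsCSeq G x ∧ cost G x = c} :=
  ((Set.finite_range (cost G)).subset <| by rintro _ ⟨x, -, rfl⟩; exact ⟨x, rfl⟩).bddAbove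

section MaxCost

variable {G : SimpleGraph V} {x : Fin (numElts G) ≃ V ⊕ G.edgeSet}

theorem cost_le_maxCost (hx : IsCSeq G x) : cost G x ≤ maxCost G :=
  le_csSup (bddAbove_costs G) ⟨x, hx, rfl⟩

theorem exists_isCSeq_cost_eq_maxCost (hx : IsCSeq G x) :
    ∃ y, IsCSeq G y ∧ cost G y = maxCost G :=
  Nat.sSup_mem (s := {c | ∃ x, IsCSeq G x ∧ cost G x = c}) ⟨_, x, hx, rfl⟩ (bddAbove_costs G)

end MaxCost

/-- Among trees with `n ≥ 2` vertices, the path and the star are extremal for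
maximum construction cost: `2n² − 2n − 1 ≤ ν*(T)` and `ν*(T) ≤ (5(n−1)² + (n−1))/2`. -/
theorem tree_maxCost_bounds {V : Type*} [Fintype V] (T : SimpleGraph V)
    (hT : T.IsTree) (n : ℕ) (hn : 2 ≤ n) (hcard : Fintype.card V = n) :
    2 * n ^ 2 - 2 * n - 1 ≤ maxCost T ∧
      2 * maxCost T ≤ 5 * (n - 1) ^ 2 + (n - 1) := by
  classical
  have : Nontrivial V := Fintype.one_lt_card_iff_nontrivial.mp (by omega)
  have hdeg : ∀ v, 1 ≤ T.degree v := fun v => hT.connected.preconnected.degree_pos_of_nontrivial v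
  have hedges : Nat.card T.edgeSet + 1 = n := by
    rw [← hcard, ← Nat.card_eq_fintype_card]
    exact (SimpleGraph.isTree_iff_connected_and_card.mp hT).2
  obtain ⟨σ, hσ⟩ := exists_equiv_fin_antitone fun v => T.degree v
  have hlower := le_two_mul_cost_vertexFirst hdeg hσ
  have hle := cost_le_maxCost (isCSeq_vertexFirst T σ)
  obtain ⟨x, hx, hmax⟩ := exists_isCSeq_cost_eq_maxCost (isCSeq_vertexFirst T σ)
  have hupper := two_mul_cost_add_le_of_one_le_degree hdeg hx
  rw [hmax, numElts] at hupper
  obtain ⟨k, rfl⟩ : ∃ k, n = k + 2 := ⟨n - 2, by omega⟩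
  have hq : Nat.card T.edgeSet = k + 1 := by omega
  rw [hcard, hq] at hlower hupper
  simp only [show 2 * (k + 1) - (k + 2) = k by omega, show k + 2 - 1 = k + 1 by omega]
    at hlower ⊢
  constructor
  · rw [Nat.sub_sub, Nat.sub_le_iff_le_add]
    nlinarith
  · nlinarith

end ConsCost
end

section
/- The maximum construction cost of the symmetric double star D_n is ν*(D_n) = 10n² + 10n + 3 for all n ≥ 1. -/
/-!
Because every edge comes after its endpoints, the cost of `x` is
`∑ₑ (2·x⁻¹e − x⁻¹u − x⁻¹w)` without truncation, and since the positions of all `p + q` elements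
are exactly `0, …, p + q − 1`, this gives `ν(x) + ∑ᵥ (deg v + 2)·x⁻¹v = (p + q)(p + q − 1)`:
the cost depends only on the positions of the vertices. In `D_n` the leaves have weight `3` and the
hubs weight `n + 3`, so the weighted sum is smallest when the vertices fill the first `2n + 2`
positions with the two hubs in front, which gives
`ν*(D_n) = (4n + 3)(4n + 2) − 3(n + 1)(2n + 1) − n`.
-/

namespace ConsCost

variable {V : Type*} [Fintype V]

/-- The symmetric double star `D_n`: two disjoint copies of the star `K_{1,n}`
(each copy indexed by an element of `Fin 2`, with hub `(i, 0)` and leaves `(i, k)`,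
`k ≠ 0`) together with an edge joining the two hubs. -/
def doubleStar (n : ℕ) : SimpleGraph (Fin 2 × Fin (n + 1)) :=
  SimpleGraph.fromRel (fun a b => a.2 = 0 ∧ (b.2 = 0 ∨ a.1 = b.1))

section Handshake

variable {α M : Type*} [AddCommMonoid M]

def endpointSum (f : α → M) : Sym2 α → M :=
  Sym2.lift ⟨fun u w => f u + f w, fun _ _ => add_comm _ _⟩

@[simp]
theorem endpointSum_mk (f : α → M) (u w : α) : endpointSum f s(u, w) = f u + f w := rfl

theorem sum_degree_smul_eq_sum_endpointSum [DecidableEq V] (G : SimpleGraph V)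
    [DecidableRel G.Adj] (f : V → M) :
    ∑ v, G.degree v • f v = ∑ e ∈ G.edgeFinset, endpointSum f e := by
  calc ∑ v, G.degree v • f v = ∑ v, ∑ e ∈ G.incidenceFinset v, f v := by
        simp only [Finset.sum_const, SimpleGraph.card_incidenceFinset_eq_degree]
    _ = ∑ e ∈ G.edgeFinset, ∑ v with v ∈ e, f v :=
        Finset.sum_comm' fun v e => by simp [SimpleGraph.incidenceFinset_eq_filter, and_comm]
    _ = ∑ e ∈ G.edgeFinset, endpointSum f e := Finset.sum_congr rfl fun e he => by
        induction e using Sym2.ind with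
        | _ u w =>
          have huw : u ≠ w := G.ne_of_adj (SimpleGraph.mem_edgeFinset.1 he)
          rw [show ({v | v ∈ s(u, w)} : Finset V) = {u, w} by ext; simp,
            Finset.sum_pair huw, endpointSum_mk]

end Handshake

section Positions

variable {α : Type*} [Fintype α]

theorem sum_val_symm_mul_two {N : ℕ} (x : Fin N ≃ α) :
    (∑ z, (x.symm z : ℕ)) * 2 = N * (N - 1) := by
  rw [Equiv.sum_comp x.symm (fun j => (j : ℕ)), Fin.sum_univ_eq_sum_range (fun j => j),
    Finset.sum_range_id_mul_two]

theorem card_mul_sub_one_le_sum_mul_two_of_injective {f : α → ℕ} (hf : f.Injective) :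
    Fintype.card α * (Fintype.card α - 1) ≤ (∑ a, f a) * 2 := by
  have hcast : (fun a => (f a : ℤ)).Injective := Nat.cast_injective.comp hf
  have h := Finset.sum_range_le_sum (s := Finset.univ.image fun a => (f a : ℤ)) (c := 0)
    (by simp)
  rw [Finset.card_image_of_injective _ hcast, Finset.sum_image fun a _ b _ h => hcast h,
    Finset.card_univ] at h
  rw [← Finset.sum_range_id_mul_two]
  gcongr
  zify
  simpa using h

end Positions

section CSeq

variable {G : SimpleGraph V} {x : Fin (numElts G) ≃ V ⊕ G.edgeSet}

theorem IsCSeq.edgeCost_add_endpointSum (hx : IsCSeq G x) (e : G.edgeSet) :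
    edgeCost G x e + endpointSum (fun v => (x.symm (.inl v) : ℕ)) e = 2 * x.symm (.inr e) := by
  obtain ⟨e, he⟩ := e
  induction e using Sym2.ind with
  | _ u w =>
    have hu := hx ⟨s(u, w), he⟩ u (Sym2.mem_mk_left u w)
    have hw := hx ⟨s(u, w), he⟩ w (Sym2.mem_mk_right u w)
    rw [Fin.lt_def] at hu hw
    simp only [edgeCost, endpointSum_mk, Sym2.lift_mk]
    omega

theorem IsCSeq.cost_add_sum_degree_add_two_mul [DecidableRel G.Adj] (hx : IsCSeq G x) :
    cost G x + ∑ v, (G.degree v + 2) * (x.symm (.inl v) : ℕ) = numElts G * (numElts G - 1) := by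
  classical
  have hcost : cost G x + ∑ v, G.degree v * (x.symm (.inl v) : ℕ) =
      2 * ∑ e : G.edgeSet, (x.symm (.inr e) : ℕ) := by
    simp only [← smul_eq_mul (a := G.degree _)]
    rw [cost, finsum_eq_sum_of_fintype, sum_degree_smul_eq_sum_endpointSum,
      SimpleGraph.edgeFinset, ← Finset.sum_set_coe, ← Finset.sum_add_distrib, Finset.mul_sum]
    exact Finset.sum_congr rfl fun e _ => hx.edgeCost_add_endpointSum e
  rw [← sum_val_symm_mul_two x, Fintype.sum_sum_type]
  simp only [add_mul, Finset.sum_add_distrib, ← Finset.mul_sum]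
  linarith

end CSeq

noncomputable def verticesFirst (G : SimpleGraph V) (σ : V ≃ Fin (Fintype.card V)) :
    Fin (numElts G) ≃ V ⊕ G.edgeSet :=
  finSumFinEquiv.symm.trans (σ.symm.sumCongr (Finite.equivFin G.edgeSet).symm)

@[simp]
theorem verticesFirst_symm_inl (G : SimpleGraph V) (σ : V ≃ Fin (Fintype.card V)) (v : V) :
    ((verticesFirst G σ).symm (.inl v) : ℕ) = σ v :=
  rfl

theorem verticesFirst_symm_inr (G : SimpleGraph V) (σ : V ≃ Fin (Fintype.card V))
    (e : G.edgeSet) :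
    ((verticesFirst G σ).symm (.inr e) : ℕ) = Fintype.card V + Finite.equivFin G.edgeSet e :=
  rfl

theorem isCSeq_verticesFirst (G : SimpleGraph V) (σ : V ≃ Fin (Fintype.card V)) :
    IsCSeq G (verticesFirst G σ) := by
  intro e v _
  rw [Fin.lt_def, verticesFirst_symm_inl, verticesFirst_symm_inr]
  exact (σ v).isLt.trans_le (Nat.le_add_right _ _)

section DoubleStar

variable {n : ℕ}

instance : DecidableRel (doubleStar n).Adj := fun _ _ =>
  decidable_of_iff' _ (SimpleGraph.fromRel_adj ..)

theorem doubleStar_adj {a b : Fin 2 × Fin (n + 1)} :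
    (doubleStar n).Adj a b ↔
      a ≠ b ∧ (a.2 = 0 ∧ b.2 = 0 ∨ a.2 = 0 ∧ a.1 = b.1 ∨ b.2 = 0 ∧ a.1 = b.1) := by
  simp only [doubleStar, SimpleGraph.fromRel_adj]
  grind

theorem neighborFinset_doubleStar_leaf (i : Fin 2) (k : Fin n) :
    (doubleStar n).neighborFinset (i, k.succ) = {(i, 0)} := by
  ext ⟨j, l⟩
  simp only [SimpleGraph.mem_neighborFinset, Finset.mem_singleton, doubleStar_adj, Prod.ext_iff,
    Fin.succ_ne_zero, false_and, false_or]
  grind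

theorem neighborFinset_doubleStar_hub (i : Fin 2) :
    (doubleStar n).neighborFinset (i, 0) = insert (i.rev, 0) ({i} ×ˢ Finset.univ.erase 0) := by
  ext ⟨j, l⟩
  simp only [SimpleGraph.mem_neighborFinset, doubleStar_adj, Finset.mem_insert,
    Finset.mem_product, Finset.mem_singleton, Finset.mem_erase, Prod.ext_iff]
  fin_cases i <;> fin_cases j <;> simp <;> tauto

theorem degree_doubleStar (v : Fin 2 × Fin (n + 1)) :
    (doubleStar n).degree v = if v.2 = 0 then n + 1 else 1 := by
  obtain ⟨i, l⟩ := v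
  rw [← SimpleGraph.card_neighborFinset_eq_degree]
  cases l using Fin.cases with
  | zero =>
    rw [neighborFinset_doubleStar_hub, Finset.card_insert_of_notMem (by fin_cases i <;> simp),
      Finset.card_product, Finset.card_erase_of_mem (Finset.mem_univ _)]
    simp
  | succ k => simp [neighborFinset_doubleStar_leaf, Fin.succ_ne_zero]

theorem sum_degree_add_two_mul_doubleStar (f : Fin 2 × Fin (n + 1) → ℕ) :
    ∑ v, ((doubleStar n).degree v + 2) * f v = 3 * ∑ v, f v + n * (f (0, 0) + f (1, 0)) := by
  rw [Fintype.sum_prod_type, Fintype.sum_prod_type, Fin.sum_univ_two, Fin.sum_univ_two]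
  simp only [degree_doubleStar, Fin.sum_univ_succ, Fin.succ_ne_zero, if_true, if_false,
    mul_add, Finset.mul_sum]
  ring

theorem numElts_doubleStar : numElts (doubleStar n) = 4 * n + 3 := by
  have hdeg := (doubleStar n).sum_degrees_eq_twice_card_edges
  rw [Fintype.sum_prod_type, Fin.sum_univ_two] at hdeg
  simp only [degree_doubleStar, Fin.sum_univ_succ, Fin.succ_ne_zero, if_true, if_false,
    Finset.sum_const, Finset.card_univ, Fintype.card_fin, smul_eq_mul, mul_one] at hdeg
  rw [numElts, Nat.card_eq_fintype_card, SimpleGraph.card_edgeSet, Fintype.card_prod,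
    Fintype.card_fin, Fintype.card_fin]
  omega

theorem IsCSeq.cost_doubleStar_add_sum_eq {x : Fin (numElts (doubleStar n)) ≃ _}
    (hx : IsCSeq (doubleStar n) x) :
    cost (doubleStar n) x + 3 * ∑ v, (x.symm (.inl v) : ℕ) +
        n * ((x.symm (.inl (0, 0)) : ℕ) + x.symm (.inl (1, 0))) =
      (4 * n + 3) * (4 * n + 2) := by
  have hN : numElts (doubleStar n) * (numElts (doubleStar n) - 1) = (4 * n + 3) * (4 * n + 2) := by
    rw [numElts_doubleStar]; rfl
  rw [← hN, ← hx.cost_add_sum_degree_add_two_mul, sum_degree_add_two_mul_doubleStar, add_assoc]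

theorem IsCSeq.cost_doubleStar_le {x : Fin (numElts (doubleStar n)) ≃ _}
    (hx : IsCSeq (doubleStar n) x) : cost (doubleStar n) x ≤ 10 * n ^ 2 + 10 * n + 3 := by
  have hinj : (fun v => (x.symm (.inl v) : ℕ)).Injective :=
    (Fin.val_injective.comp x.symm.injective).comp Sum.inl_injective
  have hS := card_mul_sub_one_le_sum_mul_two_of_injective hinj
  have hhubs : n ≤ n * ((x.symm (.inl (0, 0)) : ℕ) + x.symm (.inl (1, 0))) := by
    have := hinj.ne (a₁ := ((0 : Fin 2), (0 : Fin (n + 1)))) (a₂ := (1, 0)) (by simp)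
    exact Nat.le_mul_of_pos_right n (by omega)
  simp only [Fintype.card_prod, Fintype.card_fin, show 2 * (n + 1) - 1 = 2 * n + 1 by omega] at hS
  linarith [hx.cost_doubleStar_add_sum_eq]

def hubsFirst (n : ℕ) : Fin 2 × Fin (n + 1) ≃ Fin (Fintype.card (Fin 2 × Fin (n + 1))) :=
  (Equiv.prodComm _ _).trans (finProdFinEquiv.trans (finCongr (by simp [mul_comm])))

@[simp]
theorem hubsFirst_hub (i : Fin 2) : (hubsFirst n (i, 0) : ℕ) = i := by
  simp [hubsFirst]

theorem cost_verticesFirst_hubsFirst :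
    cost (doubleStar n) (verticesFirst _ (hubsFirst n)) = 10 * n ^ 2 + 10 * n + 3 := by
  have hid := (isCSeq_verticesFirst (doubleStar n) (hubsFirst n)).cost_doubleStar_add_sum_eq
  simp only [verticesFirst_symm_inl, hubsFirst_hub, Fin.val_zero, Fin.val_one] at hid
  have hS := sum_val_symm_mul_two (hubsFirst n).symm
  simp only [Equiv.symm_symm, Fintype.card_prod, Fintype.card_fin,
    show 2 * (n + 1) - 1 = 2 * n + 1 by omega] at hS
  linarith

end DoubleStar

theorem maxCost_doubleStar_general (n : ℕ) :
    maxCost (doubleStar n) = 10 * n ^ 2 + 10 * n + 3 :=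
  IsGreatest.csSup_eq ⟨⟨_, isCSeq_verticesFirst _ (hubsFirst n), cost_verticesFirst_hubsFirst⟩,
    by rintro _ ⟨x, hx, rfl⟩; exact hx.cost_doubleStar_le⟩

/-- `ν*(D_n) = 10n² + 10n + 3` for `n ≥ 1`. -/
theorem maxCost_doubleStar (n : ℕ) (hn : 1 ≤ n) :
    maxCost (doubleStar n) = 10 * n ^ 2 + 10 * n + 3 :=
  maxCost_doubleStar_general n

end ConsCost
end

section
/- The minimum construction cost of the cycle C_n is ν_*(C_n) = 6n − 4 for all n ≥ 3. -/
namespace ConsCost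

variable {V : Type*} [Fintype V]

/-!
For a construction sequence `x` write `pos` for `x⁻¹`. An edge `e = uw` costs
`2 pos e - pos u - pos w`, every vertex of `Cₙ` lies on exactly two edges, and the positions of
all `2n` entries are `0, …, 2n - 1`; hence `ν(x) = 4 Σₑ pos e - 2n(2n - 1)` and it remains to
minimise the sum of the edge positions.

The edges among the first `k + 1` entries join vertices among them, and a nonempty proper
vertex set of a cycle spans fewer edges than it has vertices. So for `k ≤ 2n - 2` at most `k / 2`
of the first `k + 1` entries are edges, which forces `Σₑ pos e ≥ n² + n - 1`. The sequence
`v₀ v₁ e₀ v₂ e₁ … v_{n-1} e_{n-2} e_{n-1}` (with `eᵢ = vᵢvᵢ₊₁`) attains this bound.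
-/

open Finset SimpleGraph

theorem sum_add_sum_range_card_filter_le {ι : Type*} [Fintype ι] (f : ι → ℕ) {N : ℕ}
    (hf : ∀ i, f i ≤ N) :
    ∑ i, f i + ∑ k ∈ range N, #{i | f i ≤ k} = N * Fintype.card ι := by
  have hcount (i : ι) : #{k ∈ range N | f i ≤ k} = N - f i := by
    rw [show {k ∈ range N | f i ≤ k} = Ico (f i) N by
      ext; simp only [mem_filter, mem_range, mem_Ico]; omega, Nat.card_Ico]
  calc ∑ i, f i + ∑ k ∈ range N, #{i | f i ≤ k}
      = ∑ i, (f i + #{k ∈ range N | f i ≤ k}) := by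
        simp only [card_filter]
        rw [sum_comm, sum_add_distrib]
    _ = ∑ _i : ι, N := sum_congr rfl fun i _ => by rw [hcount]; have := hf i; omega
    _ = N * Fintype.card ι := by simp [mul_comm]

theorem sum_range_div_two (t : ℕ) : ∑ k ∈ range (2 * t + 1), k / 2 = t * t := by
  induction t with
  | zero => simp
  | succ t ih =>
    rw [show 2 * (t + 1) + 1 = 2 * t + 1 + 1 + 1 by ring, sum_range_succ, sum_range_succ, ih,
      show (2 * t + 1) / 2 = t by omega, show (2 * t + 1 + 1) / 2 = t + 1 by omega]
    ring

section CyclicSets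

open Fin.CommRing

variable {n : ℕ} [NeZero n]

theorem eq_univ_of_add_one_mem {S : Finset (Fin n)} (hS : S.Nonempty)
    (h : ∀ a ∈ S, a + 1 ∈ S) : S = univ := by
  obtain ⟨a, ha⟩ := hS
  have hreach (j : ℕ) : a + j ∈ S := by
    induction j with
    | zero => simpa using ha
    | succ j ih => simpa [Nat.cast_succ, add_assoc] using h _ ih
  exact eq_univ_of_forall fun b => by simpa using hreach (b - a).val

theorem card_filter_add_one_mem_lt {S : Finset (Fin n)} (hne : S.Nonempty) (hS : S ≠ univ) :
    #{i ∈ S | i + 1 ∈ S} < #S := by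
  refine card_lt_card (ssubset_of_subset_of_ne (filter_subset _ _) fun h => hS ?_)
  refine eq_univ_of_add_one_mem hne fun a ha => ?_
  rw [← h] at ha
  exact (mem_filter.1 ha).2

end CyclicSets

section Positions

variable {G : SimpleGraph V} (x : Fin (numElts G) ≃ V ⊕ G.edgeSet)

def vertexPos (v : V) : ℕ := x.symm (.inl v)

def edgePos (e : G.edgeSet) : ℕ := x.symm (.inr e)

variable {x}

theorem IsCSeq.vertexPos_lt_edgePos (hx : IsCSeq G x) {e : G.edgeSet} {v : V}
    (hv : v ∈ (e : Sym2 V)) : vertexPos x v < edgePos x e :=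
  hx e v hv

theorem IsCSeq.edgeCost_add (hx : IsCSeq G x) {e : G.edgeSet} {u w : V}
    (he : (e : Sym2 V) = s(u, w)) :
    edgeCost G x e + (vertexPos x u + vertexPos x w) = 2 * edgePos x e := by
  have hu := hx.vertexPos_lt_edgePos (he ▸ Sym2.mem_mk_left u w)
  have hw := hx.vertexPos_lt_edgePos (he ▸ Sym2.mem_mk_right u w)
  simp only [edgeCost, he, Sym2.lift_mk]
  unfold vertexPos edgePos at *
  omega

variable (x) [Fintype G.edgeSet]

theorem two_mul_sum_vertexPos_add_sum_edgePos :
    2 * (∑ v, vertexPos x v + ∑ e, edgePos x e) = numElts G * (numElts G - 1) := by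
  have h : ∑ v, vertexPos x v + ∑ e, edgePos x e = ∑ k ∈ range (numElts G), k := by
    rw [← Fin.sum_univ_eq_sum_range, ← Equiv.sum_comp x.symm, Fintype.sum_sum_type]
    rfl
  rw [h, mul_comm, sum_range_id_mul_two]

theorem card_vertexPos_le_add_card_edgePos_le {k : ℕ} (hk : k < numElts G) :
    #{v | vertexPos x v ≤ k} + #{e | edgePos x e ≤ k} = k + 1 := by
  have h : #{z | x.symm z ≤ ⟨k, hk⟩} = #{i | i ≤ (⟨k, hk⟩ : Fin (numElts G))} :=
    card_equiv x.symm (by simp)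
  rw [filter_ge_eq_Iic, Fin.card_Iic, card_filter, Fintype.sum_sum_type] at h
  simp only [card_filter]
  exact h

end Positions

theorem minCost_eq_of_forall_le {G : SimpleGraph V} {c : ℕ}
    (x₀ : Fin (numElts G) ≃ V ⊕ G.edgeSet) (hx₀ : IsCSeq G x₀) (hc : cost G x₀ = c)
    (h : ∀ x, IsCSeq G x → c ≤ cost G x) : minCost G = c :=
  le_antisymm (Nat.sInf_le ⟨x₀, hx₀, hc⟩)
    (le_csInf ⟨c, x₀, hx₀, hc⟩ (by rintro _ ⟨x, hx, rfl⟩; exact h x hx))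

section Cycle

variable (n : ℕ)

theorem cycleGraph_adj_add_one (i : Fin (n + 2)) : (cycleGraph (n + 2)).Adj i (i + 1) :=
  cycleGraph_adj.2 (.inr (add_sub_cancel_left i 1))

def cycleEdge (i : Fin (n + 2)) : (cycleGraph (n + 2)).edgeSet :=
  ⟨s(i, i + 1), cycleGraph_adj_add_one n i⟩

theorem cycleEdge_bijective : Function.Bijective (cycleEdge (n + 1)) := by
  constructor
  · intro i j h
    rcases Sym2.eq_iff.1 (congrArg Subtype.val h) with ⟨hij, -⟩ | ⟨hij, hji⟩
    · exact hij
    · subst hij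
      rw [add_assoc j] at hji
      exact absurd (congrArg Fin.val (add_eq_left.mp hji)) (by simp [Fin.val_add, Nat.mod_eq_of_lt])
  · rintro ⟨e, he⟩
    induction e using Sym2.inductionOn with
    | hf u v =>
      rw [mem_edgeSet, cycleGraph_adj] at he
      rcases he with h | h
      · obtain rfl := sub_eq_iff_eq_add'.1 h
        exact ⟨v, Subtype.ext Sym2.eq_swap⟩
      · obtain rfl := sub_eq_iff_eq_add'.1 h
        exact ⟨u, rfl⟩

noncomputable def cycleEdgeEquiv : Fin (n + 3) ≃ (cycleGraph (n + 3)).edgeSet :=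
  .ofBijective _ (cycleEdge_bijective n)

@[simp]
theorem cycleEdgeEquiv_apply (i : Fin (n + 3)) : cycleEdgeEquiv n i = cycleEdge (n + 1) i := rfl

theorem card_edgeSet_cycleGraph : Fintype.card (cycleGraph (n + 3)).edgeSet = n + 3 := by
  rw [← Fintype.card_congr (cycleEdgeEquiv n), Fintype.card_fin]

theorem numElts_cycleGraph : numElts (cycleGraph (n + 3)) = 2 * (n + 3) := by
  rw [numElts, Nat.card_eq_fintype_card, card_edgeSet_cycleGraph, Fintype.card_fin, two_mul]

variable {n} {x : Fin (numElts (cycleGraph (n + 3))) ≃ Fin (n + 3) ⊕ (cycleGraph (n + 3)).edgeSet}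

theorem IsCSeq.cost_cycleGraph_add (hx : IsCSeq (cycleGraph (n + 3)) x) :
    cost _ x + numElts (cycleGraph (n + 3)) * (numElts (cycleGraph (n + 3)) - 1) =
      4 * ∑ e, edgePos x e := by
  have hshift : ∑ i : Fin (n + 3), vertexPos x (i + 1) = ∑ v, vertexPos x v :=
    Fintype.sum_equiv (Equiv.addRight 1) _ _ fun _ => rfl
  have hcost : cost _ x + 2 * ∑ v, vertexPos x v = 2 * ∑ e, edgePos x e :=
    calc cost _ x + 2 * ∑ v, vertexPos x v
        = ∑ i, (edgeCost _ x (cycleEdge _ i) + (vertexPos x i + vertexPos x (i + 1))) := by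
          rw [sum_add_distrib, sum_add_distrib, hshift, cost, finsum_eq_sum_of_fintype,
            ← (cycleEdgeEquiv n).sum_comp]
          simp only [cycleEdgeEquiv_apply]
          ring
      _ = ∑ i, 2 * edgePos x (cycleEdge _ i) := sum_congr rfl fun i _ => hx.edgeCost_add rfl
      _ = 2 * ∑ e, edgePos x e := by
          rw [← mul_sum, ← (cycleEdgeEquiv n).sum_comp]
          rfl
  have := two_mul_sum_vertexPos_add_sum_edgePos x
  linarith

theorem IsCSeq.card_edgePos_le_le_div_two (hx : IsCSeq (cycleGraph (n + 3)) x) {k : ℕ}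
    (hk : k + 2 ≤ 2 * (n + 3)) : #{e | edgePos x e ≤ k} ≤ k / 2 := by
  set S : Finset (Fin (n + 3)) := {v | vertexPos x v ≤ k}
  have hsplit : #S + #{e | edgePos x e ≤ k} = k + 1 :=
    card_vertexPos_le_add_card_edgePos_le x (by rw [numElts_cycleGraph]; omega)
  have hspan : #{e | edgePos x e ≤ k} ≤ #{i ∈ S | i + 1 ∈ S} := by
    refine card_le_card_of_injOn (cycleEdgeEquiv n).symm (fun e he => ?_)
      (cycleEdgeEquiv n).symm.injective.injOn
    obtain ⟨i, rfl⟩ := (cycleEdgeEquiv n).surjective e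
    simp only [coe_filter, mem_filter, mem_univ, true_and, Equiv.symm_apply_apply, S] at he ⊢
    exact ⟨(hx.vertexPos_lt_edgePos (Sym2.mem_mk_left _ _)).le.trans he,
      (hx.vertexPos_lt_edgePos (Sym2.mem_mk_right _ _)).le.trans he⟩
  have hsub : #{i ∈ S | i + 1 ∈ S} ≤ #S := card_le_card (filter_subset _ _)
  by_cases huniv : S = univ
  · rw [huniv, card_univ, Fintype.card_fin] at hsplit
    omega
  rcases S.eq_empty_or_nonempty with hempty | hne
  · have := card_eq_zero.2 hempty
    omega
  · have := card_filter_add_one_mem_lt hne huniv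
    omega

theorem IsCSeq.sum_edgePos_ge (hx : IsCSeq (cycleGraph (n + 3)) x) :
    (n + 3) * (n + 3) + (n + 3) ≤ ∑ e, edgePos x e + 1 := by
  have hlayers := sum_add_sum_range_card_filter_le (edgePos x)
    fun e => ((x.symm (.inr e)).isLt.trans_eq (numElts_cycleGraph n)).le
  have hprefix :
      ∑ k ∈ range (2 * (n + 3)), #{e | edgePos x e ≤ k} ≤ (n + 2) * (n + 2) + (n + 3) := by
    rw [show 2 * (n + 3) = 2 * (n + 2) + 1 + 1 by ring, sum_range_succ, ← sum_range_div_two]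
    gcongr ?_ + ?_
    · exact sum_le_sum fun k hk => hx.card_edgePos_le_le_div_two (by rw [mem_range] at hk; omega)
    · exact (card_filter_le _ _).trans_eq (by rw [card_univ, card_edgeSet_cycleGraph])
  rw [card_edgeSet_cycleGraph] at hlayers
  nlinarith

/-- The positions of `v₀ v₁ e₀ v₂ e₁ … v_{N-1} e_{N-2} e_{N-1}`, where `eᵢ = vᵢvᵢ₊₁`;
truncated subtraction puts `v₀` at `2 * 0 - 1 = 0`. -/
def cycleSeqPos (N : ℕ) : Fin N ⊕ Fin N → ℕ
  | .inl j => 2 * j - 1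
  | .inr i => min (2 * i + 2) (2 * N - 1)

theorem cycleSeqPos_lt {N : ℕ} (z : Fin N ⊕ Fin N) : cycleSeqPos N z < 2 * N := by
  rcases z with j | i <;> simp only [cycleSeqPos] <;> omega

theorem cycleSeqPos_injective (N : ℕ) : Function.Injective (cycleSeqPos N) := by
  rintro (a | a) (b | b) h <;> simp only [cycleSeqPos] at h <;>
    simp only [Sum.inl.injEq, Sum.inr.injEq, reduceCtorEq, Fin.ext_iff] <;> omega

theorem cycleSeqPos_bijective (N : ℕ) :
    Function.Bijective fun z => (⟨cycleSeqPos N z, cycleSeqPos_lt z⟩ : Fin (2 * N)) := by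
  refine (Fintype.bijective_iff_injective_and_card _).2 ⟨fun a b h => ?_, by simp [two_mul]⟩
  exact cycleSeqPos_injective N (congrArg Fin.val h)

variable (n)

noncomputable def cycleSeq :
    Fin (numElts (cycleGraph (n + 3))) ≃ Fin (n + 3) ⊕ (cycleGraph (n + 3)).edgeSet :=
  (finCongr (numElts_cycleGraph n)).trans <|
    (Equiv.ofBijective _ (cycleSeqPos_bijective (n + 3))).symm.trans <|
      Equiv.sumCongr (Equiv.refl _) (cycleEdgeEquiv n)

theorem vertexPos_cycleSeq (v : Fin (n + 3)) : vertexPos (cycleSeq n) v = 2 * (v : ℕ) - 1 := rfl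

theorem edgePos_cycleSeq (i : Fin (n + 3)) :
    edgePos (cycleSeq n) (cycleEdgeEquiv n i) = min (2 * (i : ℕ) + 2) (2 * (n + 3) - 1) := by
  show cycleSeqPos _ (.inr ((cycleEdgeEquiv n).symm (cycleEdgeEquiv n i))) = _
  rw [Equiv.symm_apply_apply]
  rfl

theorem isCSeq_cycleSeq : IsCSeq (cycleGraph (n + 3)) (cycleSeq n) := by
  intro e v hv
  obtain ⟨i, rfl⟩ := (cycleEdgeEquiv n).surjective e
  change vertexPos _ v < edgePos _ _
  rw [vertexPos_cycleSeq, edgePos_cycleSeq]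
  rcases Sym2.mem_iff.1 hv with rfl | rfl
  · omega
  · rw [Fin.val_add_one]
    split_ifs with hlast
    · omega
    · have := Fin.val_lt_last hlast
      omega

theorem sum_edgePos_cycleSeq :
    ∑ e, edgePos (cycleSeq n) e + 1 = (n + 3) * (n + 3) + (n + 3) := by
  rw [← (cycleEdgeEquiv n).sum_comp]
  simp only [edgePos_cycleSeq]
  rw [Fin.sum_univ_eq_sum_range (fun i => min (2 * i + 2) (2 * (n + 3) - 1)), sum_range_succ,
    sum_congr rfl fun i hi => min_eq_left (by rw [mem_range] at hi; omega), sum_add_distrib,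
    ← mul_sum, sum_const, card_range, smul_eq_mul, min_eq_right (by omega)]
  have := sum_range_id_mul_two (n + 2)
  rw [show n + 2 - 1 = n + 1 by omega] at this
  rw [show 2 * (n + 3) - 1 = 2 * n + 5 by omega]
  nlinarith

end Cycle

/-- `ν_*(C_n) = 6n − 4` for `n ≥ 3`, where `C_n` is the cycle with `n` vertices. -/
theorem minCost_cycle (n : ℕ) (hn : 3 ≤ n) :
    minCost (SimpleGraph.cycleGraph n) = 6 * n - 4 := by
  obtain ⟨n, rfl⟩ : ∃ m, n = m + 3 := ⟨n - 3, by omega⟩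
  have hN : numElts (cycleGraph (n + 3)) * (numElts (cycleGraph (n + 3)) - 1) + 6 * (n + 3) =
      4 * ((n + 3) * (n + 3) + (n + 3)) := by
    rw [numElts_cycleGraph, show 2 * (n + 3) - 1 = 2 * n + 5 by omega]
    ring
  refine minCost_eq_of_forall_le (cycleSeq n) (isCSeq_cycleSeq n) ?_ fun x hx => ?_
  · have := (isCSeq_cycleSeq n).cost_cycleGraph_add
    have := sum_edgePos_cycleSeq n
    omega
  · have := hx.cost_cycleGraph_add
    have := hx.sum_edgePos_ge
    omega

end ConsCost
end
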